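/- arXiv:0906.5419 — 4 statements merged into one kernel-verified Lean document; each statement's English description precedes it below -/
import Mathlib

section
/- Let S be a convex subset of a real vector space V with Aff(S) = V, equipped with the weak topology generated by linear functionals bounded on S. If S is separated by effects (for distinct s,t ∈ S there is an affine functional e: S → [0,1] with e(s) ≠ e(t)), then V is a Hausdorff topological vector space. -/
/-!
Since `S - S` is convex and symmetric, the cone it generates is a linear subspace, hence all of
`vectorSpan ℝ S = V`: every vector is `c • (p - q)` with `c > 0` and `p, q ∈ S`. Given `x ≠ y`,
write `x - y = c • (p - q)`; then `p ≠ q`, so an effect `e` separates `p` from `q`, and the linear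
part of `e` is bounded on `S` and separates `x` from `y`. A weak topology induced by a
point-separating family of real functions is Hausdorff.
-/

open Bornology Pointwise

theorem Convex.exists_smul_sub_eq_of_mem_vectorSpan {𝕜 V : Type*} [Field 𝕜] [LinearOrder 𝕜]
    [IsStrictOrderedRing 𝕜] [AddCommGroup V] [Module 𝕜 V] {S : Set V} (hS : Convex 𝕜 S)
    (hne : S.Nonempty) {v : V} (hv : v ∈ vectorSpan 𝕜 S) :
    ∃ c : 𝕜, 0 < c ∧ ∃ p ∈ S, ∃ q ∈ S, c • (p - q) = v := by
  set C := ConvexCone.hull 𝕜 (S - S)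
  obtain ⟨p₀, hp₀⟩ := hne
  have hC : C.Pointed := ConvexCone.subset_hull ⟨p₀, hp₀, p₀, hp₀, sub_self p₀⟩
  have hlineal : vectorSpan 𝕜 S ≤ (C.toPointedCone hC).lineal := by
    rw [vectorSpan_def, Submodule.span_le]
    rintro _ ⟨p, hp, q, hq, rfl⟩
    exact ⟨ConvexCone.subset_hull ⟨p, hp, q, hq, rfl⟩,
      ConvexCone.subset_hull ⟨q, hq, p, hp, (neg_sub p q).symm⟩⟩
  obtain ⟨c, hc, _, ⟨p, hp, q, hq, rfl⟩, hv⟩ :=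
    (ConvexCone.mem_hull_of_convex (hS.sub hS)).mp (hlineal hv).1
  exact ⟨c, hc, p, hp, q, hq, hv⟩

theorem AffineMap.isBounded_image_linear {𝕜 V W : Type*} [Ring 𝕜] [AddCommGroup V] [Module 𝕜 V]
    [SeminormedAddCommGroup W] [Module 𝕜 W] (e : V →ᵃ[𝕜] W) {S : Set V}
    (hS : IsBounded (e '' S)) : IsBounded (e.linear '' S) := by
  refine (isBounded_sub hS (isBounded_singleton (x := e 0))).subset ?_
  rintro _ ⟨x, hx, rfl⟩
  exact ⟨e x, ⟨x, hx, rfl⟩, e 0, rfl, by simp [e.decomp']⟩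

theorem t2Space_iInf_induced {ι X Y : Type*} [TopologicalSpace Y] [T2Space Y] (f : ι → X → Y)
    (hf : ∀ x y, x ≠ y → ∃ i, f i x ≠ f i y) :
    @T2Space X (⨅ i, TopologicalSpace.induced (f i) inferInstance) := by
  let t : TopologicalSpace X := ⨅ i, TopologicalSpace.induced (f i) inferInstance
  refine @T2Space.mk X t fun x y hxy => ?_
  obtain ⟨i, hi⟩ := hf x y hxy
  have hcont : @Continuous X Y t _ (f i) := continuous_iInf_dom continuous_induced_dom
  exact separated_by_continuous hcont hi

theorem exists_isBounded_linearMap_ne_of_separated {V : Type*} [AddCommGroup V] [Module ℝ V]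
    {S : Set V} (hconv : Convex ℝ S) (hspan : affineSpan ℝ S = ⊤)
    (hsep : ∀ s ∈ S, ∀ u ∈ S, s ≠ u → ∃ e : V →ᵃ[ℝ] ℝ,
      (∀ x ∈ S, e x ∈ Set.Icc (0 : ℝ) 1) ∧ e s ≠ e u)
    {x y : V} (hxy : x ≠ y) : ∃ f : V →ₗ[ℝ] ℝ, IsBounded (f '' S) ∧ f x ≠ f y := by
  have hne : S.Nonempty := (bot_lt_affineSpan ℝ).mp (hspan ▸ bot_lt_top)
  have hv : x - y ∈ vectorSpan ℝ S := by
    rw [AffineSubspace.vectorSpan_eq_top_of_affineSpan_eq_top ℝ V V hspan]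
    trivial
  obtain ⟨c, hc, p, hp, q, hq, hpq⟩ := hconv.exists_smul_sub_eq_of_mem_vectorSpan hne hv
  have hp_ne_q : p ≠ q := by
    rintro rfl
    rw [sub_self, smul_zero, eq_comm, sub_eq_zero] at hpq
    exact hxy hpq
  obtain ⟨e, he01, hepq⟩ := hsep p hp q hq hp_ne_q
  have hbdd : IsBounded (e '' S) :=
    (Metric.isBounded_Icc (0 : ℝ) 1).subset (Set.image_subset_iff.mpr he01)
  have hlin : e.linear x - e.linear y = c * (e p - e q) := by
    rw [← map_sub, ← hpq, map_smul, ← vsub_eq_sub p q, e.linearMap_vsub, smul_eq_mul, vsub_eq_sub]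
  refine ⟨e.linear, e.isBounded_image_linear hbdd, sub_ne_zero.mp ?_⟩
  rw [hlin]
  exact mul_ne_zero hc.ne' (sub_ne_zero.mpr hepq)

/-- Let `S` be a convex subset of a real vector space `V` with `Aff(S) = V`, equipped with
the weak topology generated by linear functionals bounded on `S`. If `S` is separated by
effects (affine functionals into `[0,1]`), then `V` is a Hausdorff topological vector
space. -/
theorem hausdorff_of_separated {V : Type*} [AddCommGroup V] [Module ℝ V]
    (S : Set V) (hconv : Convex ℝ S) (hspan : affineSpan ℝ S = ⊤)
    (t : TopologicalSpace V)
    (ht : t = ⨅ f : {f : V →ₗ[ℝ] ℝ // Bornology.IsBounded (f.1 '' S)},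
      TopologicalSpace.induced (f.1 : V → ℝ) inferInstance)
    (hsep : ∀ s ∈ S, ∀ u ∈ S, s ≠ u → ∃ e : V →ᵃ[ℝ] ℝ,
      (∀ x ∈ S, e x ∈ Set.Icc (0 : ℝ) 1) ∧ e s ≠ e u) :
    @T2Space V t := by
  subst ht
  refine t2Space_iInf_induced _ fun x y hxy => ?_
  obtain ⟨f, hf, hfxy⟩ := exists_isBounded_linearMap_ne_of_separated hconv hspan hsep hxy
  exact ⟨⟨f, hf⟩, hfxy⟩
end

section
/- Let S be a convex subset of a real topological vector space V with Aff(S) = V, where V carries the weak topology generated by linear functionals bounded on S. Then the subspace topology on S induced from V coincides with the weakest topology on S making every effect e: S → [0,1] (affine functional with values in [0,1]) continuous. -/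
/-! An effect `e` differs from its linear part by the constant `e 0`, and that linear part is
bounded on `S` because `e` takes values in `[0,1]` there. Conversely, a linear functional `f`
with `|f| ≤ M` on `S` equals `2M • e - M` for the effect `e = f / 2M + 1/2`. So every function
generating one of the two topologies on `S` is a continuous function of one generating the
other. -/

open Set Bornology Pointwise

theorem iInf_induced_le_iInf_induced_of_forall_exists_comp {X Y ι κ : Type*}
    [tY : TopologicalSpace Y] {f : ι → X → Y} {g : κ → X → Y}
    (h : ∀ j, ∃ i, ∃ φ : Y → Y, Continuous φ ∧ ∀ x, g j x = φ (f i x)) :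
    ⨅ i, tY.induced (f i) ≤ ⨅ j, tY.induced (g j) := by
  refine le_iInf fun j => ?_
  obtain ⟨i, φ, hφ, hg⟩ := h j
  rw [show g j = φ ∘ f i from funext hg, ← induced_compose]
  exact (iInf_le _ i).trans (induced_mono hφ.le_induced)

theorem AffineMap.isBounded_linear_image {k V W : Type*} [Ring k] [AddCommGroup V] [Module k V]
    [SeminormedAddCommGroup W] [Module k W] (e : V →ᵃ[k] W) {S : Set V}
    (hS : IsBounded (e '' S)) : IsBounded (e.linear '' S) := by
  have himage : e.linear '' S = (-e 0) +ᵥ (e '' S) := by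
    rw [← image_vadd, image_image, AffineMap.decomp']
    simp only [Pi.sub_apply, vadd_eq_add, sub_eq_neg_add]
  exact himage ▸ hS.vadd _

theorem LinearMap.exists_affineMap_mapsTo_Icc_of_isBounded {V : Type*} [AddCommGroup V]
    [Module ℝ V] {f : V →ₗ[ℝ] ℝ} {S : Set V} (hf : IsBounded (f '' S)) :
    ∃ e : V →ᵃ[ℝ] ℝ, MapsTo e S (Icc 0 1) ∧ ∃ a b : ℝ, ∀ x, f x = a * e x + b := by
  obtain ⟨M, hM, hfM⟩ := hf.exists_pos_norm_le
  let e : V →ᵃ[ℝ] ℝ := ((2 * M)⁻¹ • f).toAffineMap + AffineMap.const ℝ V (1 / 2)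
  have he : ∀ x, e x = f x / (2 * M) + 1 / 2 := fun x => by simp [e, div_eq_inv_mul]
  refine ⟨e, fun x hx => ?_, 2 * M, -M, fun x => ?_⟩
  · obtain ⟨hlo, hhi⟩ := abs_le.mp (hfM _ (mem_image_of_mem f hx))
    rw [he, mem_Icc]
    constructor <;> field_simp <;> linarith
  · rw [he]
    field_simp
    ring

theorem induced_topology_eq_effect_topology_general {V : Type*} [AddCommGroup V] [Module ℝ V]
    (S : Set V)
    (t : TopologicalSpace V)
    (ht : t = ⨅ f : {f : V →ₗ[ℝ] ℝ // Bornology.IsBounded (f.1 '' S)},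
      TopologicalSpace.induced (f.1 : V → ℝ) inferInstance) :
    TopologicalSpace.induced ((↑) : S → V) t
      = ⨅ e : {e : V →ᵃ[ℝ] ℝ // ∀ x ∈ S, e x ∈ Set.Icc (0 : ℝ) 1},
          TopologicalSpace.induced (fun s : S => e.1 s) inferInstance := by
  subst ht
  simp only [induced_iInf, induced_compose]
  refine le_antisymm (iInf_induced_le_iInf_induced_of_forall_exists_comp fun e => ?_)
    (iInf_induced_le_iInf_induced_of_forall_exists_comp fun f => ?_)
  · have hb : IsBounded (e.1 '' S) :=
      (Metric.isBounded_Icc (0 : ℝ) 1).subset (image_subset_iff.2 e.2)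
    exact ⟨⟨e.1.linear, e.1.isBounded_linear_image hb⟩, (· + e.1 0), continuous_add_const _,
      fun x => by simpa using e.1.map_vadd 0 x⟩
  · obtain ⟨e, he, a, b, hfe⟩ := f.1.exists_affineMap_mapsTo_Icc_of_isBounded f.2
    exact ⟨⟨e, he⟩, fun y => a * y + b, by fun_prop, fun x => hfe x⟩

/-- Let `S` be a convex subset of a real vector space `V` with `Aff(S) = V`, where `V`
carries the weak topology generated by linear functionals bounded on `S`. Then the
subspace topology on `S` coincides with the weakest topology on `S` making every effect
(affine functional with values in `[0,1]`) continuous. -/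
theorem induced_topology_eq_effect_topology {V : Type*} [AddCommGroup V] [Module ℝ V]
    (S : Set V) (hconv : Convex ℝ S) (hspan : affineSpan ℝ S = ⊤)
    (t : TopologicalSpace V)
    (ht : t = ⨅ f : {f : V →ₗ[ℝ] ℝ // Bornology.IsBounded (f.1 '' S)},
      TopologicalSpace.induced (f.1 : V → ℝ) inferInstance) :
    TopologicalSpace.induced ((↑) : S → V) t
      = ⨅ e : {e : V →ᵃ[ℝ] ℝ // ∀ x ∈ S, e x ∈ Set.Icc (0 : ℝ) 1},
          TopologicalSpace.induced (fun s : S => e.1 s) inferInstance :=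
  induced_topology_eq_effect_topology_general S t ht
end

section
/- Let S be a convex, dense subset of a compact convex set S̃ in a locally convex Hausdorff TVS Ṽ, and let V be a dense subspace of Ṽ containing S whose induced topology makes every linear functional on V bounded on S continuous. Then every affine functional e: S → [0,1] has a unique continuous affine extension ẽ: S̃ → [0,1], and the map e ↦ ẽ is a bijection between effects on S and continuous affine functionals S̃ → [0,1]. -/
/-- An affine functional on a convex subset `A` of a real vector space. -/
def IsAffineOn {E : Type*} [AddCommGroup E] [Module ℝ E] (A : Set E) (f : E → ℝ) : Prop :=
  ∀ x ∈ A, ∀ y ∈ A, ∀ l : ℝ, 0 ≤ l → l ≤ 1 →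
    f (l • x + (1 - l) • y) = l * f x + (1 - l) * f y

/-- A virtual effect: a continuous affine functional on `A` with values in `[0,1]`. -/
def IsVirtualEffect {E : Type*} [AddCommGroup E] [Module ℝ E] [TopologicalSpace E]
    (A : Set E) (f : E → ℝ) : Prop :=
  ContinuousOn f A ∧ IsAffineOn A f ∧ ∀ x ∈ A, f x ∈ Set.Icc (0 : ℝ) 1

/-!
An effect `e` on the convex set `S` is the restriction of `F + c` for a linear functional `F`:
the pairs `(t • (p - q), t * (e p - e q))` with `t ≥ 0` and `p, q ∈ S` form a linear subspace
of `X × ℝ` (closure under addition is exactly the affineness of `e`), which is the graph of a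
linear map. Restricted to `V`, `F` is bounded on `S` because `e` is, hence continuous, so it
extends continuously from the dense subspace `V` to all of `X`. The extension `F + c` is then
a continuous affine functional agreeing with `e` on `S`, so it maps `closure S` into `[0,1]`,
and it is unique since `S` is dense in `closure S`.
-/

lemma exists_eq_mul_and_eq_mul_one_sub {t s : ℝ} (ht : 0 ≤ t) (hs : 0 ≤ s) :
    ∃ c, 0 ≤ c ∧ ∃ l : ℝ, 0 ≤ l ∧ l ≤ 1 ∧ t = c * l ∧ s = c * (1 - l) := by
  rcases (add_nonneg ht hs).eq_or_lt with hc | hc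
  · exact ⟨0, le_rfl, 0, le_rfl, zero_le_one, by linarith, by linarith⟩
  · refine ⟨t + s, hc.le, t / (t + s), div_nonneg ht hc.le,
      (div_le_one hc).2 (by linarith), ?_, ?_⟩
    · field_simp
    · field_simp
      ring

namespace IsAffineOn

variable {X : Type*} [AddCommGroup X] [Module ℝ X] {S : Set X} {e : X → ℝ}

lemma mono {A B : Set X} (h : IsAffineOn B e) (hAB : A ⊆ B) : IsAffineOn A e :=
  fun x hx y hy l hl0 hl1 => h x (hAB hx) y (hAB hy) l hl0 hl1

def differenceGraph (hS : Convex ℝ S) (he : IsAffineOn S e) (hne : S.Nonempty) :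
    Submodule ℝ (X × ℝ) where
  carrier := {z | ∃ t : ℝ, 0 ≤ t ∧ ∃ p ∈ S, ∃ q ∈ S, z = (t • (p - q), t * (e p - e q))}
  zero_mem' :=
    ⟨0, le_rfl, hne.some, hne.some_mem, hne.some, hne.some_mem, Prod.ext (by simp) (by simp)⟩
  add_mem' := by
    rintro _ _ ⟨t, ht, p, hp, q, hq, rfl⟩ ⟨s, hs, u, hu, v, hv, rfl⟩
    obtain ⟨c, hc, l, hl0, hl1, rfl, rfl⟩ := exists_eq_mul_and_eq_mul_one_sub ht hs
    have hl1' : 0 ≤ 1 - l := sub_nonneg.2 hl1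
    refine ⟨c, hc, l • p + (1 - l) • u, hS hp hu hl0 hl1' (by ring),
      l • q + (1 - l) • v, hS hq hv hl0 hl1' (by ring), Prod.ext ?_ ?_⟩
    · simp only [Prod.fst_add]
      module
    · simp only [Prod.snd_add]
      rw [he p hp u hu l hl0 hl1, he q hq v hv l hl0 hl1]
      ring
  smul_mem' := by
    rintro r _ ⟨t, ht, p, hp, q, hq, rfl⟩
    rcases le_or_gt 0 r with hr | hr
    · exact ⟨r * t, mul_nonneg hr ht, p, hp, q, hq, Prod.ext (by simp [smul_smul]) (by simp; ring)⟩
    · refine ⟨-r * t, mul_nonneg (by linarith) ht, q, hq, p, hp, Prod.ext ?_ (by simp; ring)⟩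
      simp only [Prod.smul_fst]
      module

lemma snd_eq_zero_of_mem_differenceGraph (hS : Convex ℝ S) (he : IsAffineOn S e)
    (hne : S.Nonempty) (z : X × ℝ) (hz : z ∈ differenceGraph hS he hne) (h0 : z.1 = 0) :
    z.2 = 0 := by
  obtain ⟨t, -, p, -, q, -, rfl⟩ := hz
  rcases smul_eq_zero.1 h0 with rfl | hpq
  · simp
  · simp [sub_eq_zero.1 hpq]

theorem exists_linearMap_add_const (hS : Convex ℝ S) (he : IsAffineOn S e) :
    ∃ (F : X →ₗ[ℝ] ℝ) (c : ℝ), ∀ p ∈ S, e p = F p + c := by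
  rcases S.eq_empty_or_nonempty with rfl | hne
  · exact ⟨0, 0, by simp⟩
  set G := differenceGraph hS he hne
  obtain ⟨F, hF⟩ := LinearMap.exists_extend G.toLinearPMap.toFun
  have hdiff : ∀ p ∈ S, ∀ q ∈ S, F (p - q) = e p - e q := by
    intro p hp q hq
    have hmem : (p - q, e p - e q) ∈ G.toLinearPMap.graph := by
      rw [Submodule.toLinearPMap_graph_eq G (snd_eq_zero_of_mem_differenceGraph hS he hne)]
      exact ⟨1, zero_le_one, p, hp, q, hq, by simp⟩
    obtain ⟨y, hy, hFy⟩ := LinearPMap.mem_graph_iff _ |>.1 hmem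
    calc F (p - q) = (F ∘ₗ G.toLinearPMap.domain.subtype) y := by simp [hy]
      _ = e p - e q := by rw [hF]; exact hFy
  refine ⟨F, e hne.some - F hne.some, fun p hp => ?_⟩
  have := hdiff p hp _ hne.some_mem
  rw [map_sub] at this
  linarith

end IsAffineOn

lemma LinearMap.isAffineOn_add_const {X : Type*} [AddCommGroup X] [Module ℝ X]
    (F : X →ₗ[ℝ] ℝ) (c : ℝ) (A : Set X) : IsAffineOn A (fun x => F x + c) := by
  intro x _ y _ l _ _
  simp only [map_add, map_smul, smul_eq_mul]
  ring

theorem Submodule.exists_continuousLinearMap_extend_of_dense {𝕜 X F : Type*} [Ring 𝕜]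
    [AddCommGroup X] [Module 𝕜 X] [TopologicalSpace X] [IsTopologicalAddGroup X]
    [ContinuousConstSMul 𝕜 X] [AddCommGroup F] [Module 𝕜 F] [UniformSpace F]
    [IsUniformAddGroup F] [T0Space F] [CompleteSpace F] [ContinuousConstSMul 𝕜 F]
    {V : Submodule 𝕜 X} (hV : Dense (V : Set X)) (f : V →L[𝕜] F) :
    ∃ f' : X →L[𝕜] F, ∀ v : V, f' v = f v := by
  let _ : UniformSpace X := IsTopologicalAddGroup.rightUniformSpace X
  have _ : IsUniformAddGroup X := isUniformAddGroup_of_addCommGroup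
  have _ : IsUniformAddGroup V := V.toAddSubgroup.isUniformAddGroup
  have hdense : DenseRange (V.subtypeL : V →L[𝕜] X) := by
    simpa [DenseRange] using hV
  exact ⟨f.extend V.subtypeL, f.extend_eq hdense isUniformEmbedding_subtype_val.isUniformInducing⟩

theorem effect_extension_bijection_general {X : Type*} [AddCommGroup X] [Module ℝ X]
    [TopologicalSpace X] [IsTopologicalAddGroup X] [ContinuousSMul ℝ X]
    (S Stilde : Set X) (hS : Convex ℝ S)
    (hcl : closure S = Stilde)
    (V : Submodule ℝ X) (hSV : S ⊆ (V : Set X)) (hVdense : Dense (V : Set X))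
    (hVcont : ∀ f : V →ₗ[ℝ] ℝ,
      Bornology.IsBounded (f '' (((↑) : V → X) ⁻¹' S)) → Continuous f) :
    (∀ e : X → ℝ, IsAffineOn S e → (∀ x ∈ S, e x ∈ Set.Icc (0 : ℝ) 1) →
      ∃ g : X → ℝ, IsVirtualEffect Stilde g ∧ Set.EqOn e g S ∧
        ∀ g' : X → ℝ, IsVirtualEffect Stilde g' → Set.EqOn e g' S →
          Set.EqOn g g' Stilde) ∧
    (∀ g : X → ℝ, IsVirtualEffect Stilde g →
      IsAffineOn S g ∧ ∀ x ∈ S, g x ∈ Set.Icc (0 : ℝ) 1) := by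
  subst hcl
  refine ⟨fun e he he01 => ?_,
    fun g hg => ⟨hg.2.1.mono subset_closure, fun x hx => hg.2.2 x (subset_closure hx)⟩⟩
  obtain ⟨F, c, hFc⟩ := he.exists_linearMap_add_const hS
  have hbdd : Bornology.IsBounded ((F ∘ₗ V.subtype) '' (((↑) : V → X) ⁻¹' S)) := by
    refine Metric.isBounded_Icc (-c) (1 - c) |>.subset ?_
    rintro _ ⟨v, hv, rfl⟩
    have h01 := he01 v hv
    rw [hFc v hv, Set.mem_Icc] at h01
    show F v ∈ Set.Icc (-c) (1 - c)
    constructor <;> linarith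
  obtain ⟨F', hF'⟩ := V.exists_continuousLinearMap_extend_of_dense hVdense
    ⟨F ∘ₗ V.subtype, hVcont _ hbdd⟩
  set g : X → ℝ := fun x => F' x + c
  have hgS : Set.EqOn e g S := fun x hx => by
    rw [hFc x hx]
    exact congrArg (· + c) (hF' ⟨x, hSV hx⟩).symm
  have hgc : Continuous g := F'.continuous.add continuous_const
  have hg01 : Set.MapsTo g (closure S) (Set.Icc 0 1) := by
    have hS01 : Set.MapsTo g S (Set.Icc 0 1) := fun x hx => hgS hx ▸ he01 x hx
    simpa [isClosed_Icc.closure_eq] using hS01.closure hgc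
  exact ⟨g, ⟨hgc.continuousOn, F'.toLinearMap.isAffineOn_add_const c _, hg01⟩, hgS,
    fun g' hg' hg'S =>
      (hgS.symm.trans hg'S).of_subset_closure hgc.continuousOn hg'.1 subset_closure le_rfl⟩

/-- Every effect on `S` has a unique continuous affine extension to `S̃ = cl(S)` with
values in `[0,1]`, and `e ↦ ẽ` is a bijection between effects on `S` and virtual effects
on `S̃`.  Here `X` plays the role of the virtual underlying space `Ṽ` (a locally convex
Hausdorff TVS), and `V` the real underlying space, a dense subspace containing `S` whose
induced topology makes every linear functional bounded on `S` continuous. -/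
theorem effect_extension_bijection {X : Type*} [AddCommGroup X] [Module ℝ X]
    [TopologicalSpace X] [IsTopologicalAddGroup X] [ContinuousSMul ℝ X]
    [LocallyConvexSpace ℝ X] [T2Space X]
    (S Stilde : Set X) (hS : Convex ℝ S) (hSt : Convex ℝ Stilde)
    (hcomp : IsCompact Stilde) (hcl : closure S = Stilde)
    (V : Submodule ℝ X) (hSV : S ⊆ (V : Set X)) (hVdense : Dense (V : Set X))
    (hVcont : ∀ f : V →ₗ[ℝ] ℝ,
      Bornology.IsBounded (f '' (((↑) : V → X) ⁻¹' S)) → Continuous f) :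
    (∀ e : X → ℝ, IsAffineOn S e → (∀ x ∈ S, e x ∈ Set.Icc (0 : ℝ) 1) →
      ∃ g : X → ℝ, IsVirtualEffect Stilde g ∧ Set.EqOn e g S ∧
        ∀ g' : X → ℝ, IsVirtualEffect Stilde g' → Set.EqOn e g' S →
          Set.EqOn g g' Stilde) ∧
    (∀ g : X → ℝ, IsVirtualEffect Stilde g →
      IsAffineOn S g ∧ ∀ x ∈ S, g x ∈ Set.Icc (0 : ℝ) 1) :=
  effect_extension_bijection_general S Stilde hS hcl V hSV hVdense hVcont
end

section
/- Let ((p̃_i, s_i; 1−p̃_i, t_i))_{i=1}^N be a Helstrom family (weak Helstrom family with ratio p = P_succ), and assume the case is generic, i.e., P_succ > max_i p_i. Then every optimal observable O = (e_1,...,e_N) satisfies ẽ_i(t_i) = 0 for every i. -/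
/-- An `N`-valued observable on `A`: a tuple of effects summing to `1` on `A`. -/
def IsObservableOn {E : Type*} [AddCommGroup E] [Module ℝ E] (A : Set E) {N : ℕ}
    (e : Fin N → E → ℝ) : Prop :=
  (∀ i, IsAffineOn A (e i) ∧ ∀ x ∈ A, e i x ∈ Set.Icc (0 : ℝ) 1) ∧
    ∀ x ∈ A, (∑ i, e i x) = 1

open Finset

theorem IsObservableOn.sum_eq_one_of_mem_closure {X : Type*} [AddCommGroup X] [Module ℝ X]
    [TopologicalSpace X] {S : Set X} {N : ℕ} {e g : Fin N → X → ℝ} (hobs : IsObservableOn S e)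
    (hg : ∀ i, ContinuousOn (g i) (closure S)) (hext : ∀ i, Set.EqOn (e i) (g i) S)
    {x : X} (hx : x ∈ closure S) : ∑ i, g i x = 1 := by
  have hsum : Set.EqOn (fun y ↦ ∑ i, g i y) (fun _ ↦ 1) S := fun y hy ↦ by
    rw [← hobs.2 y hy]
    exact sum_congr rfl fun i _ ↦ (hext i hy).symm
  exact hsum.of_subset_closure (continuousOn_finsetSum _ fun i _ ↦ hg i) continuousOn_const
    subset_closure subset_rfl hx

theorem Finset.eq_zero_of_sum_pos_mul_eq_zero {ι R : Type*} [Fintype ι] [Semiring R]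
    [PartialOrder R] [IsOrderedRing R] [NoZeroDivisors R] {c x : ι → R}
    (hc : ∀ j, 0 < c j) (hx : ∀ j, 0 ≤ x j) (h : ∑ j, c j * x j = 0) (i : ι) : x i = 0 := by
  have hterm := (sum_eq_zero_iff_of_nonneg fun j _ ↦ mul_nonneg (hc j).le (hx j)).mp h i
    (mem_univ i)
  exact (mul_eq_zero.mp hterm).resolve_left (hc i).ne'

theorem helstrom_necessary_general {X : Type*} [AddCommGroup X] [Module ℝ X]
    [TopologicalSpace X]
    (S Stilde : Set X)
    (hcl : closure S = Stilde)
    (N : ℕ) (s : Fin N → X) (hs : ∀ i, s i ∈ S)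
    (p : Fin N → ℝ) (hp : ∀ i, 0 < p i)
    (ρ : ℝ)
    (t : Fin N → X) (htS : ∀ i, t i ∈ Stilde)
    (sref : X) (hsref : sref ∈ Stilde)
    (hfam : ∀ i, (p i / ρ) • s i + (1 - p i / ρ) • t i = sref)
    (hgen : ∀ i, p i < ρ)
    (e : Fin N → X → ℝ) (hobs : IsObservableOn S e)
    (g : Fin N → X → ℝ) (hg : ∀ i, IsVirtualEffect Stilde (g i))
    (hext : ∀ i, Set.EqOn (e i) (g i) S)
    (hopt : (∑ i, p i * e i (s i)) = ρ) :
    ∀ i, g i (t i) = 0 := by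
  have hSsub : S ⊆ Stilde := hcl ▸ subset_closure
  intro i
  have hρ : 0 < ρ := (hp i).trans (hgen i)
  have hweight : ∀ j, 0 ≤ p j / ρ ∧ p j / ρ < 1 := fun j ↦
    ⟨div_nonneg (hp j).le hρ.le, (div_lt_one hρ).mpr (hgen j)⟩
  have hdecomp : ∀ j, g j sref = p j / ρ * e j (s j) + (1 - p j / ρ) * g j (t j) := fun j ↦ by
    rw [← hfam j, (hg j).2.1 _ (hSsub (hs j)) _ (htS j) _ (hweight j).1 (hweight j).2.le,
      hext j (hs j)]
  have href : ∑ j, g j sref = 1 :=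
    hobs.sum_eq_one_of_mem_closure (fun j ↦ hcl ▸ (hg j).1) hext (hcl ▸ hsref)
  have hsucc : ∑ j, p j / ρ * e j (s j) = 1 := by
    rw [← div_self hρ.ne', ← hopt, sum_div]
    exact sum_congr rfl fun j _ ↦ by ring
  have hconj : ∑ j, (1 - p j / ρ) * g j (t j) = 0 := by
    simp only [hdecomp, sum_add_distrib, hsucc] at href
    linarith
  exact eq_zero_of_sum_pos_mul_eq_zero (fun j ↦ by linarith [(hweight j).2])
    (fun j ↦ ((hg j).2.2 _ (htS j)).1) hconj i

/-- Necessary condition: for a Helstrom family (weak Helstrom family whose ratio `ρ`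
equals the optimal success probability) in a generic case (`ρ > p i` for all `i`), any
optimal observable `(e i)` (one with success probability `ρ`) with continuous affine
extensions `(g i)` satisfies `g i (t i) = 0` for every `i`. -/
theorem helstrom_necessary {X : Type*} [AddCommGroup X] [Module ℝ X]
    [TopologicalSpace X] [IsTopologicalAddGroup X] [ContinuousSMul ℝ X]
    [LocallyConvexSpace ℝ X] [T2Space X]
    (S Stilde : Set X) (hS : Convex ℝ S) (hSt : Convex ℝ Stilde)
    (hcomp : IsCompact Stilde) (hcl : closure S = Stilde)
    (V : Submodule ℝ X) (hSV : S ⊆ (V : Set X)) (hVdense : Dense (V : Set X))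
    (hVcont : ∀ f : V →ₗ[ℝ] ℝ,
      Bornology.IsBounded (f '' (((↑) : V → X) ⁻¹' S)) → Continuous f)
    (N : ℕ) (s : Fin N → X) (hs : ∀ i, s i ∈ S)
    (p : Fin N → ℝ) (hp : ∀ i, 0 < p i) (hp1 : (∑ i, p i) = 1)
    (ρ : ℝ) (hρ : ∀ i, p i ≤ ρ)
    (t : Fin N → X) (htS : ∀ i, t i ∈ Stilde)
    (sref : X) (hsref : sref ∈ Stilde)
    (hfam : ∀ i, (p i / ρ) • s i + (1 - p i / ρ) • t i = sref)
    (hgen : ∀ i, p i < ρ)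
    (e : Fin N → X → ℝ) (hobs : IsObservableOn S e)
    (g : Fin N → X → ℝ) (hg : ∀ i, IsVirtualEffect Stilde (g i))
    (hext : ∀ i, Set.EqOn (e i) (g i) S)
    (hopt : (∑ i, p i * e i (s i)) = ρ) :
    ∀ i, g i (t i) = 0 :=
  helstrom_necessary_general S Stilde hcl N s hs p hp ρ t htS sref hsref hfam hgen e hobs g hg hext
    hopt
end
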